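/- Let α ∈ (0,1) and n ≥ 2, and let p_n* be a real polynomial of degree ≤ α·n, not identically zero, that maximizes ‖p‖_{[−1,1]}/‖p‖_{E_n} among all such polynomials, normalized so that ‖p_n*‖_{[−1,1]} = 1 = p_n*(x_n*) for some x_n* ∈ [−1,1]. Then all complex zeros of p_n* are real and simple, deg p_n* ≥ ⌊α·n⌋ − 1, and at least ⌊α·n⌋ − 1 of the zeros of p_n* lie in the open interval (−1,1). -/

import Mathlib

open MeasureTheory Polynomial Filter Set

/-- The `n`-grid: `n` equally spaced points in `[-1,1]` including the endpoints. -/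
noncomputable def nGrid (n : ℕ) : Set ℝ :=
  {x | ∃ k : ℕ, 1 ≤ k ∧ k ≤ n ∧ x = (2 * (k : ℝ) - n - 1) / ((n : ℝ) - 1)}

/-- Uniform norm of a real polynomial on the interval `[-1,1]`. -/
noncomputable def normI (p : Polynomial ℝ) : ℝ :=
  sSup ((fun x => |p.eval x|) '' Set.Icc (-1 : ℝ) 1)

/-- Uniform norm of a real polynomial on the `n`-grid. -/
noncomputable def normE (n : ℕ) (p : Polynomial ℝ) : ℝ :=
  sSup ((fun x => |p.eval x|) '' nGrid n)

/-- The constant `C(α)`. -/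
noncomputable def Cconst (α : ℝ) : ℝ :=
  ((1 + α) * Real.log (1 + α) + (1 - α) * Real.log (1 - α)) / 2

namespace ExtremalAux

noncomputable def gridF (n : ℕ) : Finset ℝ :=
  (Finset.Icc (1:ℕ) n).image (fun k : ℕ => (2 * (k : ℝ) - n - 1) / ((n : ℝ) - 1))

lemma nGrid_eq (n : ℕ) : nGrid n = ↑(gridF n) := by
  ext y
  simp only [nGrid, gridF, Finset.coe_image, Set.mem_image, Finset.mem_coe,
    Finset.mem_Icc, Set.mem_setOf_eq, Finset.coe_Icc]
  constructor
  · rintro ⟨k, h1, h2, h3⟩; exact ⟨k, ⟨h1, h2⟩, h3.symm⟩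
  · rintro ⟨k, ⟨h1, h2⟩, h3⟩; exact ⟨k, h1, h2, h3.symm⟩

lemma grid_nonempty {n : ℕ} (hn : 2 ≤ n) : (gridF n).Nonempty := by
  refine ⟨_, Finset.mem_image.2 ⟨1, Finset.mem_Icc.2 ⟨le_refl 1, by omega⟩, rfl⟩⟩

lemma grid_card {n : ℕ} (hn : 2 ≤ n) : (gridF n).card = n := by
  rw [gridF, Finset.card_image_of_injOn, Nat.card_Icc]
  · omega
  · intro a _ b _ hab
    have hne : ((n : ℝ) - 1) ≠ 0 := by
      have : (2:ℝ) ≤ n := by exact_mod_cast hn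
      linarith
    field_simp at hab
    have hab' : (a:ℝ) = b := by linarith
    exact_mod_cast hab'

lemma grid_subset {n : ℕ} (hn : 2 ≤ n) : nGrid n ⊆ Set.Icc (-1 : ℝ) 1 := by
  rintro y ⟨k, h1, h2, rfl⟩
  have hn1 : (0:ℝ) < (n : ℝ) - 1 := by
    have : (2:ℝ) ≤ n := by exact_mod_cast hn
    linarith
  have hk1 : (1:ℝ) ≤ k := by exact_mod_cast h1
  have hk2 : (k:ℝ) ≤ n := by exact_mod_cast h2
  constructor
  · rw [le_div_iff₀ hn1]; linarith
  · rw [div_le_one hn1]; linarith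

lemma le_normE {n : ℕ} (hn : 2 ≤ n) (q : Polynomial ℝ) {y : ℝ} (hy : y ∈ nGrid n) :
    |q.eval y| ≤ normE n q := by
  apply le_csSup
  · rw [nGrid_eq]
    exact Set.Finite.bddAbove (Set.Finite.image _ (Finset.finite_toSet _))
  · exact ⟨y, hy, rfl⟩

lemma normE_mem {n : ℕ} (hn : 2 ≤ n) (q : Polynomial ℝ) :
    ∃ y ∈ nGrid n, normE n q = |q.eval y| := by
  have hne : ((fun x => |q.eval x|) '' nGrid n).Nonempty := by
    rw [nGrid_eq]
    exact (Set.Nonempty.image _ (by exact_mod_cast grid_nonempty hn))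
  have hfin : ((fun x => |q.eval x|) '' nGrid n).Finite := by
    rw [nGrid_eq]
    exact Set.Finite.image _ (Finset.finite_toSet _)
  obtain ⟨y, hy, hval⟩ := hne.csSup_mem hfin
  exact ⟨y, hy, hval.symm⟩

lemma normE_nonneg {n : ℕ} (hn : 2 ≤ n) (q : Polynomial ℝ) : 0 ≤ normE n q := by
  obtain ⟨y, hy, h⟩ := normE_mem hn q
  rw [h]; positivity

lemma normE_lt {n : ℕ} (hn : 2 ≤ n) {q : Polynomial ℝ} {B : ℝ}
    (h : ∀ y ∈ nGrid n, |q.eval y| < B) : normE n q < B := by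
  obtain ⟨y, hy, he⟩ := normE_mem hn q
  rw [he]; exact h y hy

lemma normE_le {n : ℕ} (hn : 2 ≤ n) {q : Polynomial ℝ} {B : ℝ}
    (h : ∀ y ∈ nGrid n, |q.eval y| ≤ B) : normE n q ≤ B := by
  obtain ⟨y, hy, he⟩ := normE_mem hn q
  rw [he]; exact h y hy

lemma le_normI (q : Polynomial ℝ) {x : ℝ} (hx : x ∈ Set.Icc (-1:ℝ) 1) :
    |q.eval x| ≤ normI q := by
  apply le_csSup
  · exact IsCompact.bddAbove_image isCompact_Icc
      ((Continuous.abs (Polynomial.continuous q)).continuousOn)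
  · exact ⟨x, hx, rfl⟩

lemma normI_le {q : Polynomial ℝ} {B : ℝ}
    (h : ∀ x ∈ Set.Icc (-1:ℝ) 1, |q.eval x| ≤ B) : normI q ≤ B := by
  apply csSup_le
  · exact Set.Nonempty.image _ (Set.nonempty_Icc.2 (by norm_num))
  · rintro b ⟨x, hx, rfl⟩; exact h x hx

lemma normI_one : normI (Polynomial.C 1 : Polynomial ℝ) = 1 := by
  apply le_antisymm
  · exact normI_le (by intro x hx; simp)
  · have := le_normI (Polynomial.C 1 : Polynomial ℝ)
      (show (0:ℝ) ∈ Set.Icc (-1:ℝ) 1 by norm_num)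
    simpa using this

lemma normE_one {n : ℕ} (hn : 2 ≤ n) : normE n (Polynomial.C 1 : Polynomial ℝ) = 1 := by
  apply le_antisymm
  · exact normE_le hn (by intro y hy; simp)
  · obtain ⟨y, hy, he⟩ := normE_mem hn (Polynomial.C 1 : Polynomial ℝ)
    rw [he]; simp


set_option maxHeartbeats 1000000 in
lemma core (α : ℝ) (hα : α ∈ Set.Ioo (0 : ℝ) 1) (n : ℕ) (hn : 2 ≤ n)
    (p : Polynomial ℝ) (hp : p ≠ 0)
    (hmax : ∀ q : Polynomial ℝ, q ≠ 0 → (q.natDegree : ℝ) ≤ α * n →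
      normI q / normE n q ≤ normI p / normE n p)
    (x : ℝ) (hx : x ∈ Set.Icc (-1 : ℝ) 1)
    (hnorm : normI p = 1) (hval : p.eval x = 1)
    (hE1 : normE n p < 1) (hE0 : 0 < normE n p) (hxg : x ∉ nGrid n)
    (f S : Polynomial ℝ) (hfS : p = f * S)
    (hf0 : ∀ y ∈ nGrid n, 0 ≤ f.eval y)
    (hdq : ((max f.natDegree 2 + S.natDegree : ℕ) : ℝ) ≤ α * n) : False := by
  classical
  obtain ⟨hα0, hα1⟩ := hα
  have hnpos : (0:ℝ) < n := by positivity
  have hS0 : S ≠ 0 := fun h => hp (by rw [hfS, h, mul_zero])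
  have hpxmul : f.eval x * S.eval x = 1 := by rw [← Polynomial.eval_mul, ← hfS, hval]
  have hfx : f.eval x ≠ 0 := left_ne_zero_of_mul_eq_one hpxmul
  set N := normE n p with hN
  set τ : ℝ → ℝ := fun y =>
    (if |p.eval y| < N then N - |p.eval y| else N) / (4 * (|S.eval y| + 1)) with hτdef
  have hτ : ∀ y ∈ gridF n, 0 < τ y := by
    intro y _
    rw [hτdef]
    dsimp only
    split_ifs with h
    · exact div_pos (by linarith) (by positivity)
    · exact div_pos hE0 (by positivity)
  set ε := (gridF n).inf' (grid_nonempty hn) τ with hεdef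
  have hε : 0 < ε := (Finset.lt_inf'_iff _).2 hτ
  set g := f - C ε * (X - C x) ^ 2 with hgdef
  set q := g * S with hqdef
  have hgx : g.eval x = f.eval x := by simp [hgdef]
  have hgxne : g.eval x ≠ 0 := by rw [hgx]; exact hfx
  have hg0 : g ≠ 0 := fun h => hgxne (by rw [h, eval_zero])
  have hq0 : q ≠ 0 := mul_ne_zero hg0 hS0
  have hqx : q.eval x = 1 := by rw [hqdef, eval_mul, hgx]; exact hpxmul
  have hdC : (C ε * (X - C x) ^ 2).natDegree ≤ 2 := by
    apply le_trans (natDegree_mul_le)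
    simp [natDegree_pow, natDegree_X_sub_C]
  have hdg : g.natDegree ≤ max f.natDegree 2 := by
    apply le_trans (natDegree_sub_le _ _)
    exact max_le (le_max_left _ _) (le_trans hdC (le_max_right _ _))
  have hdq' : (q.natDegree : ℝ) ≤ α * n := by
    have h3 : q.natDegree ≤ max f.natDegree 2 + S.natDegree :=
      le_trans natDegree_mul_le (by have := hdg; omega)
    exact le_trans (by exact_mod_cast h3) hdq
  have key : ∀ y ∈ nGrid n, |q.eval y| < N := by
    intro y hy
    have hyF : y ∈ gridF n := by rw [nGrid_eq] at hy; exact_mod_cast hy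
    have hyI := grid_subset hn hy
    have hyx : y ≠ x := fun h => hxg (h ▸ hy)
    have hfy := hf0 y hy
    have hu4 : (y - x) ^ 2 ≤ 4 := by nlinarith [hyI.1, hyI.2, hx.1, hx.2]
    have hyx0 : y - x ≠ 0 := sub_ne_zero.2 hyx
    have hu0 : 0 < (y - x) ^ 2 := by positivity
    have hτy : ε ≤ τ y := Finset.inf'_le _ hyF
    have hpy : p.eval y = f.eval y * S.eval y := by rw [hfS, eval_mul]
    have hpabs : |p.eval y| = f.eval y * |S.eval y| := by
      rw [hpy, abs_mul, abs_of_nonneg hfy]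
    have hqy : q.eval y = (f.eval y - ε * (y - x) ^ 2) * S.eval y := by
      simp [hqdef, hgdef]
    have hpN : |p.eval y| ≤ N := le_normE hn p hy
    by_cases hyN : |p.eval y| < N
    · have hτval : τ y = (N - |p.eval y|) / (4 * (|S.eval y| + 1)) := by
        rw [hτdef]; dsimp only; rw [if_pos hyN]
      have hd : (0:ℝ) < 4 * (|S.eval y| + 1) := by positivity
      have hkey : 4 * ε * (|S.eval y| + 1) ≤ N - |p.eval y| := by
        rw [hτval] at hτy
        calc 4 * ε * (|S.eval y| + 1) = ε * (4 * (|S.eval y| + 1)) := by ring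
          _ ≤ ((N - |p.eval y|) / (4 * (|S.eval y| + 1))) * (4 * (|S.eval y| + 1)) :=
              mul_le_mul_of_nonneg_right hτy (le_of_lt hd)
          _ = N - |p.eval y| := div_mul_cancel₀ _ (ne_of_gt hd)
      have habs1 : |q.eval y| ≤ (f.eval y + ε * (y - x) ^ 2) * |S.eval y| := by
        rw [hqy, abs_mul]
        apply mul_le_mul_of_nonneg_right _ (abs_nonneg _)
        rw [abs_le]
        constructor <;> nlinarith [hε, hu0]
      have habs2 : |q.eval y| ≤ |p.eval y| + 4 * ε * |S.eval y| := by
        calc |q.eval y| ≤ (f.eval y + ε * (y - x) ^ 2) * |S.eval y| := habs1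
          _ = |p.eval y| + (ε * (y - x) ^ 2) * |S.eval y| := by rw [hpabs]; ring
          _ ≤ |p.eval y| + (4 * ε) * |S.eval y| := by
              have : ε * (y - x) ^ 2 ≤ 4 * ε := by nlinarith
              nlinarith [abs_nonneg (S.eval y)]
      nlinarith [abs_nonneg (S.eval y)]
    · have hpyN : |p.eval y| = N := le_antisymm hpN (not_lt.1 hyN)
      have hτval : τ y = N / (4 * (|S.eval y| + 1)) := by
        rw [hτdef]; dsimp only; rw [if_neg hyN]
      have hSy0 : |S.eval y| ≠ 0 := by
        intro h
        rw [hpabs, h, mul_zero] at hpyN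
        linarith
      have hSypos : 0 < |S.eval y| := lt_of_le_of_ne (abs_nonneg _) (Ne.symm hSy0)
      have hNfS : N = f.eval y * |S.eval y| := by rw [← hpyN, hpabs]
      have hfypos : 0 < f.eval y := by nlinarith
      have hu_lt : ε * (y - x) ^ 2 < f.eval y := by
        have h1 : ε * (y - x) ^ 2 ≤ 4 * ε := by nlinarith
        have h2 : 4 * ε ≤ 4 * τ y := by linarith
        have h3 : 4 * τ y = N / (|S.eval y| + 1) := by
          rw [hτval]; field_simp
        have h4 : N / (|S.eval y| + 1) < N / |S.eval y| :=
          div_lt_div_of_pos_left hE0 hSypos (by linarith)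
        have h5 : N / |S.eval y| = f.eval y := by
          rw [hNfS]; field_simp
        linarith
      rw [hqy, abs_mul]
      have habs : |f.eval y - ε * (y - x) ^ 2| < f.eval y := by
        rw [abs_lt]; constructor <;> nlinarith [hε, hu0]
      calc |f.eval y - ε * (y - x) ^ 2| * |S.eval y| < f.eval y * |S.eval y| :=
            mul_lt_mul_of_pos_right habs hSypos
        _ = N := hNfS.symm
  have hNq : normE n q < N := normE_lt hn key
  have hNq0 : 0 < normE n q := by
    have hex : ∃ y ∈ nGrid n, q.eval y ≠ 0 := by
      by_contra hall
      push_neg at hall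
      have hsub : gridF n ⊆ q.roots.toFinset := by
        intro y hy
        rw [Multiset.mem_toFinset, Polynomial.mem_roots hq0]
        exact hall y (by rw [nGrid_eq]; exact_mod_cast hy)
      have h1 : n ≤ q.roots.toFinset.card := by
        rw [← grid_card hn]; exact Finset.card_le_card hsub
      have h2 : q.roots.toFinset.card ≤ q.natDegree :=
        le_trans (Multiset.toFinset_card_le _) (Polynomial.card_roots' q)
      have h3 : (n:ℝ) ≤ q.natDegree := by exact_mod_cast le_trans h1 h2
      nlinarith
    obtain ⟨y, hy, hyne⟩ := hex
    exact lt_of_lt_of_le (abs_pos.2 hyne) (le_normE hn q hy)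
  have hm := hmax q hq0 hdq'
  rw [hnorm] at hm
  have h1q : (1:ℝ) ≤ normI q := by
    have h := le_normI q hx
    rw [hqx] at h
    simpa using h
  have hA : 1 / normE n q ≤ normI q / normE n q := by
    gcongr
  have hB : 1 / N < 1 / normE n q := one_div_lt_one_div_of_lt hNq0 hNq
  linarith


lemma sign_aux (t : Multiset ℝ) (h : ∀ r ∈ t, r ≤ -1 ∨ 1 ≤ r) :
    ∃ σ : ℝ, σ ^ 2 = 1 ∧
      ∀ y ∈ Set.Icc (-1:ℝ) 1, 0 ≤ σ * ((t.map fun r => X - C r).prod.eval y) := by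
  induction t using Multiset.induction with
  | empty => exact ⟨1, by norm_num, by intro y _; simp⟩
  | cons r t ih =>
    obtain ⟨σ, hσ2, hσpos⟩ := ih (fun s hs => h s (Multiset.mem_cons_of_mem hs))
    have heval : ∀ y : ℝ, ((r ::ₘ t).map fun r => X - C r).prod.eval y
        = (y - r) * ((t.map fun r => X - C r).prod.eval y) := by
      intro y; rw [Multiset.map_cons, Multiset.prod_cons, eval_mul, eval_sub, eval_X, eval_C]
    rcases h r (Multiset.mem_cons_self r t) with hr | hr
    · refine ⟨σ, hσ2, fun y hy => ?_⟩
      rw [heval]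
      have h1 : 0 ≤ y - r := by have := hy.1; linarith
      have h2 := hσpos y hy
      nlinarith
    · refine ⟨-σ, by nlinarith, fun y hy => ?_⟩
      rw [heval]
      have h1 : 0 ≤ r - y := by have := hy.2; linarith
      have h2 := hσpos y hy
      nlinarith

lemma normE_pos {α : ℝ} {n : ℕ} (hα : α ∈ Set.Ioo (0 : ℝ) 1) (hn : 2 ≤ n)
    {p : Polynomial ℝ}
    (hmax : ∀ q : Polynomial ℝ, q ≠ 0 → (q.natDegree : ℝ) ≤ α * n →
      normI q / normE n q ≤ normI p / normE n p)
    (hnorm : normI p = 1) : 0 < normE n p := by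
  have hαn : (0:ℝ) ≤ α * n := mul_nonneg (le_of_lt hα.1) (Nat.cast_nonneg n)
  have h1 := hmax (C 1) (by simp) (by simpa using hαn)
  rw [normI_one, normE_one hn, hnorm] at h1
  norm_num at h1
  rcases lt_or_eq_of_le (normE_nonneg hn p) with h | h
  · exact h
  · rw [← h] at h1; norm_num at h1

lemma normE_lt_one {α : ℝ} {n : ℕ} (hα : α ∈ Set.Ioo (0 : ℝ) 1) (hn : 2 ≤ n)
    {p : Polynomial ℝ} (h2 : (2:ℝ) ≤ α * n)
    (hmax : ∀ q : Polynomial ℝ, q ≠ 0 → (q.natDegree : ℝ) ≤ α * n →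
      normI q / normE n q ≤ normI p / normE n p)
    (hnorm : normI p = 1) : normE n p < 1 := by
  have hE0 := normE_pos hα hn hmax hnorm
  have hn1 : (0:ℝ) < (n:ℝ) - 1 := by
    have : (2:ℝ) ≤ (n:ℝ) := by exact_mod_cast hn
    linarith
  set c : ℝ := (2 - (n:ℝ)) / ((n:ℝ) - 1) with hcdef
  set δ : ℝ := 1 / ((n:ℝ) - 1) with hδdef
  have hδpos : 0 < δ := by positivity
  have hδle : δ ≤ 1 := by
    rw [hδdef, div_le_one hn1]
    have : (2:ℝ) ≤ (n:ℝ) := by exact_mod_cast hn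
    linarith
  have hcI : c ∈ Set.Icc (-1:ℝ) 1 := by
    constructor
    · rw [hcdef, le_div_iff₀ hn1]; linarith
    · rw [hcdef, div_le_one hn1]
      have : (2:ℝ) ≤ (n:ℝ) := by exact_mod_cast hn
      linarith
  set q₀ : Polynomial ℝ := C 1 - C (1/8) * (X - C c) ^ 2 with hq₀def
  have heval : ∀ yy : ℝ, q₀.eval yy = 1 - (1/8) * (yy - c)^2 := by
    intro yy; simp [hq₀def]
  have hgridlb : ∀ y ∈ nGrid n, δ^2 ≤ (y - c)^2 := by
    rintro y ⟨k, hk1, hk2, rfl⟩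
    have hyc : (2 * (k:ℝ) - n - 1) / ((n:ℝ) - 1) - c = (2*(k:ℝ) - 3) / ((n:ℝ) - 1) := by
      rw [hcdef, div_sub_div_same]; ring_nf
    rw [hyc, hδdef, div_pow, div_pow, div_le_div_iff₀ (by positivity) (by positivity)]
    have hsq : 1 ≤ (2*(k:ℝ) - 3)^2 := by
      rcases le_or_gt k 1 with h | h
      · have : (k:ℝ) ≤ 1 := by exact_mod_cast h
        nlinarith
      · have : (2:ℝ) ≤ (k:ℝ) := by exact_mod_cast h
        nlinarith
    nlinarith [sq_nonneg ((n:ℝ) - 1)]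
  have hgridub : ∀ y ∈ nGrid n, |q₀.eval y| ≤ 1 - δ^2/8 := by
    intro y hy
    have hyI := grid_subset hn hy
    have h4 : (y - c)^2 ≤ 4 := by nlinarith [hyI.1, hyI.2, hcI.1, hcI.2]
    have hlb := hgridlb y hy
    rw [heval, abs_le]
    constructor <;> nlinarith [hδpos, hδle]
  have hENle : normE n q₀ ≤ 1 - δ^2/8 := normE_le hn hgridub
  have hEN0 : 0 < normE n q₀ := by
    obtain ⟨y0, hy0⟩ := grid_nonempty hn
    have hy0' : y0 ∈ nGrid n := by rw [nGrid_eq]; exact_mod_cast hy0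
    have hyI := grid_subset hn hy0'
    have h4 : (y0 - c)^2 ≤ 4 := by nlinarith [hyI.1, hyI.2, hcI.1, hcI.2]
    have : (1:ℝ)/2 ≤ |q₀.eval y0| := by
      rw [heval]
      rw [le_abs]
      left; nlinarith
    have := le_normE hn q₀ hy0'
    linarith
  have hq₀ne : q₀ ≠ 0 := by
    intro h
    have := heval c
    rw [h] at this
    simp at this
  have hq₀deg : (q₀.natDegree : ℝ) ≤ α * n := by
    have hd : q₀.natDegree ≤ 2 := by
      apply le_trans (natDegree_sub_le _ _)
      apply max_le (by simp)
      apply le_trans natDegree_mul_le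
      simp [natDegree_pow, natDegree_X_sub_C]
    calc (q₀.natDegree : ℝ) ≤ 2 := by exact_mod_cast hd
      _ ≤ α * n := h2
  have hI1 : 1 ≤ normI q₀ := by
    have hqc : q₀.eval c = 1 := by rw [heval]; simp
    have := le_normI q₀ hcI
    rw [hqc] at this
    simpa using this
  have hm := hmax q₀ hq₀ne hq₀deg
  rw [hnorm] at hm
  have hA : 1 / normE n q₀ ≤ normI q₀ / normE n q₀ := by gcongr
  have hfin : 1 / normE n q₀ ≤ 1 / normE n p := le_trans hA hm
  have : normE n p ≤ normE n q₀ := le_of_one_div_le_one_div hEN0 hfin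
  nlinarith [hδpos]

end ExtremalAux

open ExtremalAux in
theorem extremal_poly_zeros (α : ℝ) (hα : α ∈ Set.Ioo (0 : ℝ) 1)
    (n : ℕ) (hn : 2 ≤ n)
    (p : Polynomial ℝ) (hp : p ≠ 0) (hdeg : (p.natDegree : ℝ) ≤ α * n)
    (hmax : ∀ q : Polynomial ℝ, q ≠ 0 → (q.natDegree : ℝ) ≤ α * n →
      normI q / normE n q ≤ normI p / normE n p)
    (x : ℝ) (hx : x ∈ Set.Icc (-1 : ℝ) 1)
    (hnorm : normI p = 1) (hval : p.eval x = 1) :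
    -- all complex zeros are real
    (∀ z ∈ (p.map (algebraMap ℝ ℂ)).roots, z.im = 0) ∧
    -- all complex zeros are simple
    (p.map (algebraMap ℝ ℂ)).roots.Nodup ∧
    -- the degree is at least ⌊αn⌋ - 1
    ⌊α * (n : ℝ)⌋₊ - 1 ≤ p.natDegree ∧
    -- at least ⌊αn⌋ - 1 zeros lie in the open interval (-1,1)
    ⌊α * (n : ℝ)⌋₊ - 1 ≤ Multiset.card (p.roots.filter (fun t => -1 < t ∧ t < 1)) := by
    classical
  have hα0 : (0:ℝ) < α := hα.1
  have hα1 : α < 1 := hα.2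
  have hαn0 : (0:ℝ) ≤ α * n := mul_nonneg (le_of_lt hα0) (Nat.cast_nonneg n)
  have hpc0 : p.map (algebraMap ℝ ℂ) ≠ 0 := Polynomial.map_ne_zero hp
  by_cases hcase : (2:ℝ) ≤ α * n
  · -- main case
    have hE0 : 0 < normE n p := normE_pos hα hn hmax hnorm
    have hE1 : normE n p < 1 := normE_lt_one hα hn hcase hmax hnorm
    have hxg : x ∉ nGrid n := by
      intro h
      have h1 := le_normE hn p h
      rw [hval] at h1
      simp only [abs_one] at h1
      linarith
    have hfl2 : 2 ≤ ⌊α * (n:ℝ)⌋₊ := Nat.le_floor (by exact_mod_cast hcase)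
    -- Part A : all complex roots are real
    have hA : ∀ z ∈ (p.map (algebraMap ℝ ℂ)).roots, z.im = 0 := by
      intro z hz
      by_contra him
      have hzr : (p.map (algebraMap ℝ ℂ)).IsRoot z := ((Polynomial.mem_roots hpc0).1 hz)
      have haev : (Polynomial.aeval z) p = 0 := by
        rw [Polynomial.aeval_def, ← Polynomial.eval_map]; exact hzr
      have hint : IsIntegral ℝ z := IsIntegral.of_finite ℝ z
      set f : Polynomial ℝ := (X - C z.re)^2 + C (z.im^2) with hfdef
      have hdf2 : ((X - C z.re)^2 : Polynomial ℝ).natDegree = 2 := by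
        rw [natDegree_pow, natDegree_X_sub_C]
      have hdf : f.natDegree = 2 := by
        rw [hfdef, natDegree_add_C, hdf2]
      have hf0' : f ≠ 0 := fun h => by simp [h] at hdf
      have hflc : f.leadingCoeff = 1 := by
        rw [Polynomial.leadingCoeff, hdf, hfdef, coeff_add]
        have h1 : ((X - C z.re)^2 : Polynomial ℝ).coeff 2 = 1 := by
          have hh := ((monic_X_sub_C z.re).pow 2).coeff_natDegree
          rwa [hdf2] at hh
        rw [h1, coeff_C]; norm_num
      have haevf : (Polynomial.aeval z) f = 0 := by
        have hkey : ((z - (z.re:ℂ))^2 + ((z.im:ℝ):ℂ)^2 : ℂ) = 0 := by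
          have hz1 : z - (z.re:ℂ) = z.im * Complex.I := by
            apply Complex.ext <;> simp
          rw [hz1, mul_pow, Complex.I_sq]; ring
        rw [hfdef]
        simp only [map_add, map_pow, map_sub, Polynomial.aeval_X, Polynomial.aeval_C]
        simpa using hkey
      have hdvd1 := minpoly.dvd ℝ z haev
      have hdvd2 := minpoly.dvd ℝ z haevf
      have hmp : (minpoly ℝ z).Monic := minpoly.monic hint
      have hd2 : (minpoly ℝ z).natDegree ≤ 2 := by
        have := Polynomial.natDegree_le_of_dvd hdvd2 hf0'
        omega
      have hd1 : (minpoly ℝ z).natDegree ≠ 1 := by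
        intro h1
        have heq := hmp.eq_X_add_C h1
        have ham : (Polynomial.aeval z) (minpoly ℝ z) = 0 := minpoly.aeval ℝ z
        rw [heq] at ham
        simp only [map_add, Polynomial.aeval_X, Polynomial.aeval_C] at ham
        have hzeq : z = -((algebraMap ℝ ℂ) ((minpoly ℝ z).coeff 0)) :=
          eq_neg_of_add_eq_zero_left ham
        apply him
        rw [hzeq]
        simp
      have hdpos := minpoly.natDegree_pos hint
      have hd : (minpoly ℝ z).natDegree = 2 := by omega
      obtain ⟨u, hu⟩ := hdvd2
      have hu0 : u ≠ 0 := by rintro rfl; rw [mul_zero] at hu; exact hf0' hu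
      have hud : u.natDegree = 0 := by
        have hnm := natDegree_mul (hmp.ne_zero) hu0
        rw [← hu, hdf, hd] at hnm; omega
      have hulc : u = C (u.coeff 0) := Polynomial.eq_C_of_natDegree_eq_zero hud
      have huc : u.coeff 0 = 1 := by
        have hlc := congrArg Polynomial.leadingCoeff hu
        rw [hflc, Polynomial.leadingCoeff_mul, hmp.leadingCoeff, one_mul, hulc,
          Polynomial.leadingCoeff_C] at hlc
        exact hlc.symm
      have hfu : f = minpoly ℝ z := by
        rw [hu, hulc, huc, map_one, mul_one]
      have hfdvd : f ∣ p := hfu ▸ hdvd1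
      obtain ⟨S, hS⟩ := hfdvd
      have hS0 : S ≠ 0 := fun h => hp (by rw [hS, h, mul_zero])
      refine core α hα n hn p hp hmax x hx hnorm hval hE1 hE0 hxg f S hS ?_ ?_
      · intro y _
        rw [hfdef]
        simp only [eval_add, eval_pow, eval_sub, eval_X, eval_C]
        positivity
      · have hnd : p.natDegree = 2 + S.natDegree := by
          rw [hS, natDegree_mul hf0' hS0, hdf]
        calc ((max f.natDegree 2 + S.natDegree : ℕ):ℝ)
            = ((2 + S.natDegree : ℕ):ℝ) := by rw [hdf]; norm_num
          _ = (p.natDegree : ℝ) := by exact_mod_cast hnd.symm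
          _ ≤ α * n := hdeg
    -- Part B : roots are simple
    have hB : (p.map (algebraMap ℝ ℂ)).roots.Nodup := by
      rw [Multiset.nodup_iff_count_le_one]
      intro z
      by_contra hcnt
      push_neg at hcnt
      have hzmem : z ∈ (p.map (algebraMap ℝ ℂ)).roots := Multiset.count_pos.1 (by omega)
      have him := hA z hzmem
      have hzre : (algebraMap ℝ ℂ) z.re = z := by
        apply Complex.ext <;> simp [him]
      have hrm : 2 ≤ rootMultiplicity z (p.map (algebraMap ℝ ℂ)) := by
        rw [← Polynomial.count_roots]; omega
      have hdvd : (X - C z)^2 ∣ p.map (algebraMap ℝ ℂ) :=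
        dvd_trans (pow_dvd_pow _ hrm) (Polynomial.pow_rootMultiplicity_dvd _ z)
      have hmapeq : ((X - C z.re)^2 : Polynomial ℝ).map (algebraMap ℝ ℂ) = (X - C z)^2 := by
        rw [Polynomial.map_pow, Polynomial.map_sub, Polynomial.map_X, Polynomial.map_C, hzre]
      rw [← hmapeq] at hdvd
      have hdvdR : ((X - C z.re)^2 : Polynomial ℝ) ∣ p :=
        (Polynomial.map_dvd_map (algebraMap ℝ ℂ) (algebraMap ℝ ℂ).injective
          ((monic_X_sub_C z.re).pow 2)).1 hdvd
      obtain ⟨S, hS⟩ := hdvdR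
      have hdf : ((X - C z.re)^2 : Polynomial ℝ).natDegree = 2 := by
        rw [natDegree_pow, natDegree_X_sub_C]
      have hf0' : ((X - C z.re)^2 : Polynomial ℝ) ≠ 0 := ((monic_X_sub_C z.re).pow 2).ne_zero
      have hS0 : S ≠ 0 := fun h => hp (by rw [hS, h, mul_zero])
      refine core α hα n hn p hp hmax x hx hnorm hval hE1 hE0 hxg _ S hS ?_ ?_
      · intro y _
        simp only [eval_pow, eval_sub, eval_X, eval_C]
        positivity
      · have hnd : p.natDegree = 2 + S.natDegree := by
          rw [hS, natDegree_mul hf0' hS0, hdf]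
        calc ((max ((X - C z.re)^2 : Polynomial ℝ).natDegree 2 + S.natDegree : ℕ):ℝ)
            = ((2 + S.natDegree : ℕ):ℝ) := by rw [hdf]; norm_num
          _ = (p.natDegree : ℝ) := by exact_mod_cast hnd.symm
          _ ≤ α * n := hdeg
    -- Part C : lower bound on degree
    have hC : ⌊α * (n:ℝ)⌋₊ - 1 ≤ p.natDegree := by
      by_contra hcon
      push_neg at hcon
      refine core α hα n hn p hp hmax x hx hnorm hval hE1 hE0 hxg (C 1) p (one_mul p).symm ?_ ?_
      · intro y _; simp
      · calc ((max (C (1:ℝ)).natDegree 2 + p.natDegree : ℕ):ℝ)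
            = ((2 + p.natDegree : ℕ):ℝ) := by rw [natDegree_C]; norm_num
          _ ≤ (⌊α * (n:ℝ)⌋₊ : ℝ) := by
              exact_mod_cast (by omega : 2 + p.natDegree ≤ ⌊α * (n:ℝ)⌋₊)
          _ ≤ α * n := Nat.floor_le hαn0
    -- Part D : roots inside (-1,1)
    have hD : ⌊α * (n:ℝ)⌋₊ - 1 ≤
        Multiset.card (p.roots.filter (fun t => -1 < t ∧ t < 1)) := by
      by_contra hcon
      push_neg at hcon
      have hdcard : p.natDegree = Multiset.card (p.map (algebraMap ℝ ℂ)).roots :=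
        by rw [← natDegree_map (algebraMap ℝ ℂ)]; exact (IsAlgClosed.splits _).natDegree_eq_card_roots
      have rm_map : ∀ r : ℝ,
          rootMultiplicity ((algebraMap ℝ ℂ) r) (p.map (algebraMap ℝ ℂ))
            = rootMultiplicity r p := by
        intro r
        apply le_antisymm
        · rw [Polynomial.le_rootMultiplicity_iff hp]
          have h1 := Polynomial.pow_rootMultiplicity_dvd (p.map (algebraMap ℝ ℂ))
            ((algebraMap ℝ ℂ) r)
          have hmapeq : ((X - C r) ^ rootMultiplicity ((algebraMap ℝ ℂ) r)
              (p.map (algebraMap ℝ ℂ)) : Polynomial ℝ).map (algebraMap ℝ ℂ)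
              = (X - C ((algebraMap ℝ ℂ) r)) ^ rootMultiplicity ((algebraMap ℝ ℂ) r)
                (p.map (algebraMap ℝ ℂ)) := by
            rw [Polynomial.map_pow, Polynomial.map_sub, Polynomial.map_X, Polynomial.map_C]
          rw [← hmapeq] at h1
          exact (Polynomial.map_dvd_map (algebraMap ℝ ℂ) (algebraMap ℝ ℂ).injective
            ((monic_X_sub_C r).pow _)).1 h1
        · rw [Polynomial.le_rootMultiplicity_iff hpc0]
          have h1 := Polynomial.map_dvd (algebraMap ℝ ℂ) (Polynomial.pow_rootMultiplicity_dvd p r)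
          rw [Polynomial.map_pow, Polynomial.map_sub, Polynomial.map_X, Polynomial.map_C] at h1
          exact h1
      have hle : (p.map (algebraMap ℝ ℂ)).roots ≤ p.roots.map (fun r : ℝ => (algebraMap ℝ ℂ) r) := by
        rw [Multiset.le_iff_count]
        intro z
        by_cases him : z.im = 0
        · have hzre : (algebraMap ℝ ℂ) z.re = z := by
            apply Complex.ext <;> simp [him]
          have hinj : Function.Injective (fun r : ℝ => (algebraMap ℝ ℂ) r) :=
            fun a b hab => (algebraMap ℝ ℂ).injective hab
          rw [← hzre, Multiset.count_map_eq_count' _ _ hinj, Polynomial.count_roots,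
            Polynomial.count_roots, rm_map]
        · have hnm : z ∉ (p.map (algebraMap ℝ ℂ)).roots := fun h => him (hA z h)
          rw [Multiset.count_eq_zero.2 hnm]
          exact Nat.zero_le _
      have hcard : Multiset.card p.roots = p.natDegree := by
        have h1 := Multiset.card_le_card hle
        rw [Multiset.card_map] at h1
        have h2 := Polynomial.card_roots' p
        omega
      have hmc : Multiset.card (p.roots.filter (fun t => -1 < t ∧ t < 1))
          + Multiset.card (p.roots.filter (fun t : ℝ => ¬(-1 < t ∧ t < 1)))
          = p.natDegree := by
        have hsplit := Multiset.filter_add_not (fun t : ℝ => -1 < t ∧ t < 1) p.roots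
        have hcc := congrArg Multiset.card hsplit
        rw [Multiset.card_add] at hcc
        omega
      set t : Multiset ℝ := p.roots.filter (fun t : ℝ => ¬(-1 < t ∧ t < 1)) with htdef
      have hc1 : 1 ≤ Multiset.card t := by omega
      have hdvd : (t.map fun r => X - C r).prod ∣ p :=
        dvd_trans (Multiset.prod_dvd_prod_of_le (Multiset.map_le_map (Multiset.filter_le _ _)))
          (Polynomial.prod_multiset_X_sub_C_dvd p)
      obtain ⟨S₀, hS₀⟩ := hdvd
      have hf₀mon : ((t.map fun r => X - C r).prod).Monic :=
        Polynomial.monic_multiset_prod_of_monic _ _ (fun r _ => monic_X_sub_C r)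
      have hf₀deg : ((t.map fun r => X - C r).prod).natDegree = Multiset.card t :=
        Polynomial.natDegree_multiset_prod_X_sub_C_eq_card t
      have hS₀0 : S₀ ≠ 0 := fun h => hp (by rw [hS₀, h, mul_zero])
      have hdS₀ : p.natDegree = Multiset.card t + S₀.natDegree := by
        rw [hS₀, natDegree_mul hf₀mon.ne_zero hS₀0, hf₀deg]
      have hout : ∀ r ∈ t, r ≤ -1 ∨ 1 ≤ r := by
        intro r hr
        have h1 := (Multiset.mem_filter.1 hr).2
        by_cases h2 : -1 < r
        · right
          by_contra h3
          push_neg at h3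
          exact h1 ⟨h2, h3⟩
        · left; linarith [not_lt.1 h2]
      obtain ⟨σ, hσ2, hσpos⟩ := sign_aux t hout
      have hσ0 : σ ≠ 0 := by
        intro h; rw [h] at hσ2; norm_num at hσ2
      have hCσ : (C σ : Polynomial ℝ) * C σ = 1 := by
        rw [← C_mul, show σ * σ = 1 by nlinarith, C_1]
      have hfS' : p = (C σ * (t.map fun r => X - C r).prod) * (C σ * S₀) := by
        calc p = (C σ * C σ) * ((t.map fun r => X - C r).prod * S₀) := by
              rw [hCσ, one_mul, ← hS₀]
          _ = (C σ * (t.map fun r => X - C r).prod) * (C σ * S₀) := by ring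
      refine core α hα n hn p hp hmax x hx hnorm hval hE1 hE0 hxg _ _ hfS' ?_ ?_
      · intro y hy
        rw [eval_mul, eval_C]
        exact hσpos y (grid_subset hn hy)
      · have hdf : (C σ * (t.map fun r => X - C r).prod).natDegree = Multiset.card t := by
          rw [Polynomial.natDegree_C_mul hσ0, hf₀deg]
        have hdS : (C σ * S₀).natDegree = S₀.natDegree := Polynomial.natDegree_C_mul hσ0
        rw [hdf, hdS]
        rcases le_or_gt 2 (Multiset.card t) with h | h
        · rw [max_eq_left h]
          calc ((Multiset.card t + S₀.natDegree : ℕ):ℝ)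
              = (p.natDegree:ℝ) := by exact_mod_cast hdS₀.symm
            _ ≤ α * n := hdeg
        · have hceq : Multiset.card t = 1 := by omega
          have hmax2 : max (Multiset.card t) 2 = 2 := max_eq_right (by omega)
          have hnat : max (Multiset.card t) 2 + S₀.natDegree ≤ ⌊α * (n:ℝ)⌋₊ := by
            rw [hmax2]; omega
          calc ((max (Multiset.card t) 2 + S₀.natDegree : ℕ):ℝ)
              ≤ (⌊α * (n:ℝ)⌋₊:ℝ) := by exact_mod_cast hnat
            _ ≤ α * n := Nat.floor_le hαn0
    exact ⟨hA, hB, hC, hD⟩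
  · -- small case : degree at most 1
    push_neg at hcase
    have hd1 : p.natDegree ≤ 1 := by
      by_contra h
      push_neg at h
      have : (2:ℝ) ≤ (p.natDegree : ℝ) := by exact_mod_cast h
      linarith
    have hdm : (p.map (algebraMap ℝ ℂ)).natDegree ≤ 1 := by
      rw [Polynomial.natDegree_map]; exact hd1
    have hcard1 : Multiset.card (p.map (algebraMap ℝ ℂ)).roots ≤ 1 :=
      le_trans (Polynomial.card_roots' _) hdm
    have hA : ∀ z ∈ (p.map (algebraMap ℝ ℂ)).roots, z.im = 0 := by
      intro z hz
      have hzr : (p.map (algebraMap ℝ ℂ)).IsRoot z := ((Polynomial.mem_roots hpc0).1 hz)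
      have hform := Polynomial.eq_X_add_C_of_natDegree_le_one hd1
      have heval : (p.coeff 1 : ℂ) * z + (p.coeff 0 : ℂ) = 0 := by
        have h0 : (p.map (algebraMap ℝ ℂ)).eval z = 0 := hzr
        rw [hform, Polynomial.map_add, Polynomial.map_mul, Polynomial.map_C,
          Polynomial.map_X, Polynomial.map_C] at h0
        simpa using h0
      by_cases hc1 : p.coeff 1 = 0
      · exfalso
        rw [hc1] at heval
        simp at heval
        apply hp
        rw [hform, hc1, heval]
        simp
      · have h2 : p.coeff 1 * z.im = 0 := by
          have h3 := congrArg Complex.im heval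
          simpa using h3
        rcases mul_eq_zero.1 h2 with h | h
        · exact absurd h hc1
        · exact h
    have hfl : ⌊α * (n:ℝ)⌋₊ ≤ 1 := by
      have h1 : ⌊α * (n:ℝ)⌋₊ < 2 := (Nat.floor_lt hαn0).2 hcase
      omega
    refine ⟨hA, ?_, by omega, by omega⟩
    rw [Multiset.nodup_iff_count_le_one]
    intro z
    exact le_trans (Multiset.count_le_card z _) hcard1
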